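/- Let A be a unital alternative *-algebra over ℂ containing a nontrivial symmetric idempotent e satisfying conditions (♠) and (♣), and let Φ : A → A be a map satisfying the *-Jordan n-derivation identity in the last two slots. Then for every a₁₂, b₁₂ ∈ A₁₂ and c₂₁, d₂₁ ∈ A₂₁ one has Φ(a₁₂b₁₂ + a₁₂*) = Φ(a₁₂b₁₂) + Φ(a₁₂*) and Φ(c₂₁d₂₁ + c₂₁*) = Φ(c₂₁d₂₁) + Φ(c₂₁*). -/

import Mathlib

/-- The Jordan `•`-product `a • b = ab + b a*`. -/
def starJordan {A : Type*} [NonAssocRing A] [StarRing A] (a b : A) : A :=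
  a * b + b * star a

/-- Left-normed iterated Jordan `•`-product of a list (empty list ↦ 0, junk value). -/
def leftStarJordan {A : Type*} [NonAssocRing A] [StarRing A] : List A → A
  | [] => 0
  | x :: xs => xs.foldl starJordan x

/-- The family `a₁ = ⋯ = a_{n-2} = 1`, `a_{n-1} = x`, `a_n = y`. -/
def lastTwoFamily {A : Type*} [One A] (n : ℕ) (x y : A) : Fin n → A :=
  fun i => if (i : ℕ) = n - 2 then x else if (i : ℕ) = n - 1 then y else 1

/-- `e₁ = e`, `e₂ = 1 - e`. -/
def peirceIdem {A : Type*} [NonAssocRing A] (e : A) : Fin 2 → A :=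
  fun i => if i = 0 then e else 1 - e

/-- Membership in the Peirce component `A_{ij}`: `eᵢ x = x` and `x eⱼ = x`. -/
def inPeirce {A : Type*} [NonAssocRing A] (e : A) (i j : Fin 2) (x : A) : Prop :=
  peirceIdem e i * x = x ∧ x * peirceIdem e j = x

/-- The inner derivation `Ξ_{y,z}(a) = y(za) − z(ya) + y(az) − (ya)z + (az)y − (ay)z`. -/
def innerDer {A : Type*} [NonAssocRing A] (y z a : A) : A :=
  y * (z * a) - z * (y * a) + y * (a * z) - (y * a) * z + (a * z) * y - (a * y) * z

/-!
With `a₁ = ⋯ = a_{n-2} = 1` the defining identity becomes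
`Φ (N • (x • y)) = (c • x) • y + N • (Φ x • y + x • Φ y)` with `N = 2 ^ (n - 2)` and a constant `c`.
Comparing it at `(u + v, y)` with its values at `(u, y)` and `(v, y)` shows that the defect
`d = Φ (u + v) - Φ u - Φ v` satisfies `d • y = 0` whenever `v • y = 0`; comparing in the second
slot, `x • d = 0` whenever `x • u = 0`. Taking `x, y` among `e`, `1 - e`, `2e - 1` forces `d = 0` when
`u ∈ A₁₂ + A₂₁, v ∈ A₁₁` and when `u ∈ A₁₂, v ∈ A₂₁`.
For `a, b ∈ A₁₂`, the identity at `(a / N, b + (1 - e))` gives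
`Φ (ab + ba* + a + a*) = Φ (ab + ba*) + Φ (a + a*)`, which these additivity rules split into the
claim. The `A₂₁` case is the `A₁₂` case for the idempotent `1 - e`.
-/

section

variable {A : Type*}

section StarJordan

variable [NonAssocRing A] [StarRing A]

lemma starJordan_add_left (x x' y : A) :
    starJordan (x + x') y = starJordan x y + starJordan x' y := by
  simp only [starJordan, add_mul, mul_add, star_add]; abel

lemma starJordan_add_right (x y y' : A) :
    starJordan x (y + y') = starJordan x y + starJordan x y' := by
  simp only [starJordan, add_mul, mul_add]; abel

lemma starJordan_sub_left (x x' y : A) :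
    starJordan (x - x') y = starJordan x y - starJordan x' y := by
  simp only [starJordan, sub_mul, mul_sub, star_sub]; abel

lemma starJordan_sub_right (x y y' : A) :
    starJordan x (y - y') = starJordan x y - starJordan x y' := by
  simp only [starJordan, sub_mul, mul_sub]; abel

lemma starJordan_nsmul_left (N : ℕ) (x y : A) :
    starJordan (N • x) y = N • starJordan x y := by
  simp only [starJordan, smul_mul_assoc, star_nsmul, mul_smul_comm, smul_add]

lemma starJordan_sum_left {ι : Type*} (s : Finset ι) (f : ι → A) (y : A) :
    starJordan (∑ i ∈ s, f i) y = ∑ i ∈ s, starJordan (f i) y :=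
  map_sum (AddMonoidHom.mk' (starJordan · y) (starJordan_add_left · · y)) f s

lemma one_starJordan (x : A) : starJordan 1 x = 2 • x := by
  rw [starJordan, one_mul, star_one, mul_one, two_nsmul]

lemma starJordan_of_star_eq {x : A} (hx : star x = x) (y : A) :
    starJordan x y = x * y + y * x := by
  rw [starJordan, hx]

lemma foldl_starJordan_nsmul (N : ℕ) (a : A) (l : List A) :
    l.foldl starJordan (N • a) = N • l.foldl starJordan a := by
  induction l generalizing a with
  | nil => rfl
  | cons b l ih => rw [List.foldl_cons, List.foldl_cons, starJordan_nsmul_left, ih]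

lemma leftStarJordan_one_cons {l : List A} (hl : l ≠ []) :
    leftStarJordan (1 :: l) = 2 • leftStarJordan l := by
  obtain ⟨a, l, rfl⟩ := List.exists_cons_of_ne_nil hl
  simp only [leftStarJordan, List.foldl_cons, one_starJordan, foldl_starJordan_nsmul]

lemma leftStarJordan_append_singleton {l : List A} (hl : l ≠ []) (y : A) :
    leftStarJordan (l ++ [y]) = starJordan (leftStarJordan l) y := by
  obtain ⟨a, l, rfl⟩ := List.exists_cons_of_ne_nil hl
  simp only [leftStarJordan, List.cons_append, List.foldl_append, List.foldl_cons, List.foldl_nil]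

lemma leftStarJordan_append_pair {l : List A} (hl : l ≠ []) (x y : A) :
    leftStarJordan (l ++ [x, y]) = starJordan (starJordan (leftStarJordan l) x) y := by
  rw [← List.singleton_append, ← List.append_assoc,
    leftStarJordan_append_singleton (by simp), leftStarJordan_append_singleton hl]

lemma leftStarJordan_replicate_one_append (m : ℕ) (x y : A) :
    leftStarJordan (List.replicate m 1 ++ [x, y]) = 2 ^ m • starJordan x y := by
  induction m with
  | zero => rw [pow_zero, one_smul]; rfl
  | succ m ih =>
    rw [List.replicate_succ, List.cons_append, leftStarJordan_one_cons (by simp), ih,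
      smul_smul, pow_succ']

end StarJordan

section LastTwoFamily

variable [One A] (m : ℕ) (x y : A)

lemma lastTwoFamily_castSucc_castSucc (k : Fin m) :
    lastTwoFamily (m + 2) x y k.castSucc.castSucc = 1 := by
  simp [lastTwoFamily, k.isLt.ne, (k.isLt.trans (Nat.lt_succ_self m)).ne]

lemma lastTwoFamily_penultimate : lastTwoFamily (m + 2) x y (Fin.last m).castSucc = x := by
  simp [lastTwoFamily]

lemma lastTwoFamily_last : lastTwoFamily (m + 2) x y (Fin.last (m + 1)) = y := by
  simp [lastTwoFamily]

lemma update_lastTwoFamily_penultimate (z : A) :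
    Function.update (lastTwoFamily (m + 2) x y) (Fin.last m).castSucc z =
      lastTwoFamily (m + 2) z y := by
  ext i
  simp only [Function.update_apply, lastTwoFamily, Fin.ext_iff]
  split_ifs <;> simp_all

lemma update_lastTwoFamily_last (z : A) :
    Function.update (lastTwoFamily (m + 2) x y) (Fin.last (m + 1)) z =
      lastTwoFamily (m + 2) x z := by
  ext i
  simp only [Function.update_apply, lastTwoFamily, Fin.ext_iff]
  split_ifs <;> simp_all

lemma ofFn_lastTwoFamily :
    List.ofFn (lastTwoFamily (m + 2) x y) = List.replicate m 1 ++ [x, y] := by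
  refine List.ext_getElem (by simp) fun i h _ => ?_
  rw [List.getElem_ofFn]
  rw [List.length_ofFn] at h
  obtain hi | rfl | rfl : i < m ∨ i = m ∨ i = m + 1 := by omega
  · simp [lastTwoFamily, List.getElem_append_left, hi, hi.ne, (hi.trans (Nat.lt_succ_self m)).ne]
  · simp [lastTwoFamily]
  · simp [lastTwoFamily]

lemma ofFn_update_lastTwoFamily_castSucc_castSucc (k : Fin m) (z : A) :
    List.ofFn (Function.update (lastTwoFamily (m + 2) x y) k.castSucc.castSucc z) =
      (List.replicate m 1).set k z ++ [x, y] := by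
  refine List.ext_getElem (by simp) fun i h _ => ?_
  rw [List.getElem_ofFn]
  rw [List.length_ofFn] at h
  obtain hi | rfl | rfl : i < m ∨ i = m ∨ i = m + 1 := by omega
  · simp [Function.update_apply, Fin.ext_iff, lastTwoFamily, List.getElem_append_left, hi, hi.ne,
      (hi.trans (Nat.lt_succ_self m)).ne, List.getElem_set, eq_comm]
  · simp [Fin.ext_iff, lastTwoFamily, k.isLt.ne']
  · simp [Fin.ext_iff, lastTwoFamily, (k.isLt.trans (Nat.lt_succ_self m)).ne']

end LastTwoFamily

section Peirce

variable [NonAssocRing A] {e x : A}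

lemma inPeirce_zero_zero_iff : inPeirce e 0 0 x ↔ e * x = x ∧ x * e = x := by
  simp [inPeirce, peirceIdem]

lemma inPeirce_zero_one_iff : inPeirce e 0 1 x ↔ e * x = x ∧ x * e = 0 := by
  simp [inPeirce, peirceIdem, mul_sub]

lemma inPeirce_one_zero_iff : inPeirce e 1 0 x ↔ e * x = 0 ∧ x * e = x := by
  simp [inPeirce, peirceIdem, sub_mul]

lemma inPeirce_one_zero_iff_inPeirce_one_sub : inPeirce e 1 0 x ↔ inPeirce (1 - e) 0 1 x := by
  simp [inPeirce, peirceIdem]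

lemma inPeirce_star [StarRing A] (heStar : star e = e) {i j : Fin 2} (hx : inPeirce e i j x) :
    inPeirce e j i (star x) := by
  have hself (k : Fin 2) : star (peirceIdem e k) = peirceIdem e k := by
    fin_cases k <;> simp [peirceIdem, heStar]
  exact ⟨by rw [← hself j, ← star_mul, hx.2], by rw [← hself i, ← star_mul, hx.1]⟩

lemma mul_mul_add_mul_mul_of_alternative_left (halt : ∀ a b : A, a * a * b = a * (a * b))
    (x y z : A) : x * y * z + y * x * z = x * (y * z) + y * (x * z) := by
  have h := halt (x + y) z
  simp only [add_mul, mul_add] at h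
  linear_combination (norm := abel1) h - halt x z - halt y z

lemma mul_mul_add_mul_mul_of_alternative_right (halt : ∀ a b : A, b * a * a = b * (a * a))
    (x y z : A) : x * y * z + x * z * y = x * (y * z) + x * (z * y) := by
  have h := halt (y + z) x
  simp only [add_mul, mul_add] at h
  linear_combination (norm := abel1) h - halt y x - halt z x

lemma inPeirce_one_zero_mul_of_zero_one (halt₁ : ∀ a b : A, a * a * b = a * (a * b))
    (halt₂ : ∀ a b : A, b * a * a = b * (a * a)) {u w : A} (hu : inPeirce e 0 1 u)
    (hw : inPeirce e 0 1 w) : inPeirce e 1 0 (u * w) := by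
  rw [inPeirce_zero_one_iff] at hu hw
  have hl := mul_mul_add_mul_mul_of_alternative_left halt₁ e u w
  have hr := mul_mul_add_mul_mul_of_alternative_right halt₂ u w e
  rw [hu.1, hu.2, zero_mul, hw.1, add_zero] at hl
  rw [hu.2, zero_mul, hw.2, mul_zero, hw.1, add_zero, zero_add] at hr
  exact inPeirce_one_zero_iff.mpr ⟨right_eq_add.mp hl, hr⟩

lemma inPeirce_zero_zero_mul_of_zero_one_of_one_zero (halt₁ : ∀ a b : A, a * a * b = a * (a * b))
    (halt₂ : ∀ a b : A, b * a * a = b * (a * a)) {u v : A} (hu : inPeirce e 0 1 u)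
    (hv : inPeirce e 1 0 v) : inPeirce e 0 0 (u * v) := by
  rw [inPeirce_zero_one_iff] at hu
  rw [inPeirce_one_zero_iff] at hv
  have hl := mul_mul_add_mul_mul_of_alternative_left halt₁ e u v
  have hr := mul_mul_add_mul_mul_of_alternative_right halt₂ u v e
  rw [hu.1, hu.2, zero_mul, hv.1, mul_zero, add_zero, add_zero] at hl
  rw [hu.2, zero_mul, hv.2, hv.1, mul_zero, add_zero, add_zero] at hr
  exact inPeirce_zero_zero_iff.mpr ⟨hl.symm, hr⟩

end Peirce

/-- The identity satisfied by a `*`-Jordan `n`-derivation on `1 • ⋯ • 1 • x • y`: here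
`N = 2 ^ (n - 2)`, and `c` collects the terms in which `Φ` falls on one of the leading `1`s. -/
def IsScaledStarJordanDer [NonAssocRing A] [StarRing A] (Φ : A → A) (N : ℕ) (c : A) : Prop :=
  ∀ x y, Φ (N • starJordan x y) =
    starJordan (starJordan c x) y + N • (starJordan (Φ x) y + starJordan x (Φ y))

lemma isScaledStarJordanDer_of_lastTwoFamily [NonAssocRing A] [StarRing A] {m : ℕ} {Φ : A → A}
    (hΦ : ∀ x y : A,
      Φ (leftStarJordan (List.ofFn (lastTwoFamily (m + 2) x y))) =
        ∑ k : Fin (m + 2), leftStarJordan (List.ofFn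
          (Function.update (lastTwoFamily (m + 2) x y) k (Φ (lastTwoFamily (m + 2) x y k))))) :
    IsScaledStarJordanDer Φ (2 ^ m)
      (∑ k : Fin m, leftStarJordan ((List.replicate m 1).set k (Φ 1))) := by
  intro x y
  have hne (k : Fin m) : (List.replicate m (1 : A)).set k (Φ 1) ≠ [] := by
    simpa using k.pos.ne'
  rw [← leftStarJordan_replicate_one_append, ← ofFn_lastTwoFamily, hΦ,
    Fin.sum_univ_castSucc, Fin.sum_univ_castSucc, lastTwoFamily_penultimate, lastTwoFamily_last,
    update_lastTwoFamily_penultimate, update_lastTwoFamily_last, ofFn_lastTwoFamily,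
    ofFn_lastTwoFamily, leftStarJordan_replicate_one_append, leftStarJordan_replicate_one_append,
    starJordan_sum_left, starJordan_sum_left, smul_add]
  simp only [lastTwoFamily_castSucc_castSucc, ofFn_update_lastTwoFamily_castSucc_castSucc,
    leftStarJordan_append_pair (hne _), add_assoc]

namespace IsScaledStarJordanDer

variable [NonAssocRing A] [StarRing A] {Φ : A → A} {N : ℕ} {c e : A}

lemma map_zero (hΦ : IsScaledStarJordanDer Φ N c) : Φ 0 = 0 := by
  simpa [starJordan] using hΦ 0 0

lemma map_starJordan_add (hΦ : IsScaledStarJordanDer Φ N c) (hdiv : ∀ x : A, ∃ u, N • u = x)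
    {p q : A} (hpq : Φ (p + q) = Φ p + Φ q) (a : A) :
    Φ (starJordan a (p + q)) = Φ (starJordan a p) + Φ (starJordan a q) := by
  obtain ⟨u, rfl⟩ := hdiv a
  rw [starJordan_nsmul_left, starJordan_nsmul_left, starJordan_nsmul_left, hΦ, hΦ, hΦ, hpq]
  simp only [starJordan_add_right, smul_add]
  abel

variable [IsAddTorsionFree A]

lemma starJordan_map_add_sub_left (hΦ : IsScaledStarJordanDer Φ N c) (hN : N ≠ 0)
    {u v y : A} (hvy : starJordan v y = 0) :
    starJordan (Φ (u + v) - Φ u - Φ v) y = 0 := by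
  have huv := hΦ (u + v) y
  have hv := hΦ v y
  rw [starJordan_add_left, hvy, add_zero, hΦ] at huv
  rw [hvy, smul_zero, hΦ.map_zero] at hv
  apply nsmul_right_injective hN
  simp only [starJordan_add_left, starJordan_add_right, starJordan_sub_left, smul_add, smul_sub,
    smul_zero] at huv hv ⊢
  linear_combination (norm := abel1) hv - huv

lemma starJordan_map_add_sub_right (hΦ : IsScaledStarJordanDer Φ N c) (hN : N ≠ 0)
    {x p q : A} (hxp : starJordan x p = 0) :
    starJordan x (Φ (p + q) - Φ p - Φ q) = 0 := by
  have hpq := hΦ x (p + q)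
  have hp := hΦ x p
  rw [starJordan_add_right x p, hxp, zero_add, hΦ] at hpq
  rw [hxp, smul_zero, hΦ.map_zero] at hp
  apply nsmul_right_injective hN
  simp only [starJordan_add_right, starJordan_sub_right, smul_add, smul_sub, smul_zero] at hpq hp ⊢
  linear_combination (norm := abel1) hp - hpq

end IsScaledStarJordanDer


namespace IsScaledStarJordanDer

variable [NonAssocRing A] [StarRing A] [IsAddTorsionFree A] {Φ : A → A} {N : ℕ} {c e : A}

lemma map_add_of_inPeirce_zero_zero (hΦ : IsScaledStarJordanDer Φ N c) (hN : N ≠ 0)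
    (heStar : star e = e) {u v : A} (hu : e * u + u * e = u) (hv : inPeirce e 0 0 v) :
    Φ (u + v) = Φ u + Φ v := by
  rw [inPeirce_zero_zero_iff] at hv
  have hs : star (e - (1 - e)) = e - (1 - e) := by simp [heStar]
  have hf : star (1 - e) = 1 - e := by simp [heStar]
  have h₁ := hΦ.starJordan_map_add_sub_right hN (q := v) (show starJordan (e - (1 - e)) u = 0 by
    rw [starJordan_of_star_eq hs]
    simp only [sub_mul, mul_sub, one_mul, mul_one]
    linear_combination (norm := abel1) hu + hu)
  have h₂ := hΦ.starJordan_map_add_sub_right hN (q := u) (show starJordan (1 - e) v = 0 by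
    rw [starJordan_of_star_eq hf]
    simp only [sub_mul, mul_sub, one_mul, mul_one]
    linear_combination (norm := abel1) -hv.1 - hv.2)
  rw [starJordan_of_star_eq hs] at h₁
  rw [starJordan_of_star_eq hf, add_comm v u] at h₂
  simp only [sub_mul, mul_sub, one_mul, mul_one] at h₁ h₂
  rw [← sub_eq_zero, ← sub_sub, ← two_nsmul_eq_zero, two_nsmul]
  linear_combination (norm := abel1) h₁ + h₂ + h₂

lemma map_add_of_inPeirce_zero_one_of_one_zero (hΦ : IsScaledStarJordanDer Φ N c) (hN : N ≠ 0)
    (halt : ∀ a b : A, a * a * b = a * (a * b)) (heStar : star e = e) (heIdem : e * e = e)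
    {u v : A} (hu : inPeirce e 0 1 u) (hv : inPeirce e 1 0 v) :
    Φ (u + v) = Φ u + Φ v := by
  have hus := inPeirce_star heStar hu
  have hvs := inPeirce_star heStar hv
  rw [inPeirce_zero_one_iff] at hu hvs
  rw [inPeirce_one_zero_iff] at hv hus
  have hs : star (e - (1 - e)) = e - (1 - e) := by simp [heStar]
  have h₁ := hΦ.starJordan_map_add_sub_left hN (u := v) (show starJordan u e = 0 by
    rw [starJordan, hu.2, hus.1, add_zero])
  have h₂ := hΦ.starJordan_map_add_sub_left hN (u := u) (show starJordan v (1 - e) = 0 by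
    rw [starJordan, mul_sub, sub_mul, hv.2, hvs.1, mul_one, one_mul, sub_self, sub_self, add_zero])
  have h₃ := hΦ.starJordan_map_add_sub_right hN (q := v) (show starJordan (e - (1 - e)) u = 0 by
    rw [starJordan_of_star_eq hs]
    simp only [sub_mul, mul_sub, one_mul, mul_one]
    linear_combination (norm := abel1) hu.1 + hu.1 + hu.2 + hu.2)
  rw [add_comm v u, sub_right_comm] at h₁
  rw [starJordan_of_star_eq hs] at h₃
  set d := Φ (u + v) - Φ u - Φ v
  simp only [starJordan, mul_sub, sub_mul, one_mul, mul_one] at h₁ h₂ h₃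
  have hstar : star d = -d := by
    linear_combination (norm := abel1) h₁ + h₂
  have hcomm : d * e = e * d := by
    rw [hstar, mul_neg] at h₁
    linear_combination (norm := abel1) h₁
  have h₄ : 2 • (2 • (e * d)) = 2 • d := by
    rw [hcomm] at h₃
    linear_combination (norm := abel1) h₃
  have hed : e * d = 0 := by
    have hee : e * (e * d) = e * d := by rw [← halt, heIdem]
    have h := congrArg (e * ·) h₄
    simp only [mul_smul_comm, hee] at h
    rw [← two_nsmul_eq_zero, two_nsmul]
    linear_combination (norm := abel1) h
  rw [← sub_eq_zero, ← sub_sub, ← two_nsmul_eq_zero, ← h₄, hed, smul_zero, smul_zero]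

theorem map_mul_add_star (hΦ : IsScaledStarJordanDer Φ N c) (hN : N ≠ 0)
    (hdiv : ∀ x : A, ∃ u, N • u = x) (halt₁ : ∀ a b : A, a * a * b = a * (a * b))
    (halt₂ : ∀ a b : A, b * a * a = b * (a * a)) (heStar : star e = e) (heIdem : e * e = e)
    {a b : A} (ha : inPeirce e 0 1 a) (hb : inPeirce e 0 1 b) :
    Φ (a * b + star a) = Φ (a * b) + Φ (star a) := by
  have hab := inPeirce_one_zero_mul_of_zero_one halt₁ halt₂ ha hb
  have has := inPeirce_star heStar ha
  have hbas := inPeirce_zero_zero_mul_of_zero_one_of_one_zero halt₁ halt₂ hb has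
  have hsum {v : A} (hv : inPeirce e 1 0 v) : Φ (a + v) = Φ a + Φ v :=
    hΦ.map_add_of_inPeirce_zero_one_of_one_zero hN halt₁ heStar heIdem ha hv
  have haas : Φ (a + star a) = Φ a + Φ (star a) := hsum has
  rw [inPeirce_zero_one_iff] at ha hb
  rw [inPeirce_one_zero_iff] at hab has
  have hbf : (1 - e) * b + b * (1 - e) = b := by
    simp only [sub_mul, mul_sub, one_mul, mul_one, hb.1, hb.2, sub_zero, sub_self, zero_add]
  have hf : inPeirce (1 - e) 0 0 (1 - e) := by
    simp [inPeirce_zero_zero_iff, sub_mul, mul_sub, heIdem]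
  have hsplit := hΦ.map_starJordan_add hdiv
    (hΦ.map_add_of_inPeirce_zero_zero hN (by simp [heStar]) hbf hf) a
  have hab' : Φ (a * b + b * star a) = Φ (a * b) + Φ (b * star a) :=
    hΦ.map_add_of_inPeirce_zero_zero hN heStar (by rw [hab.1, hab.2, zero_add]) hbas
  have hbig : Φ (a + (a * b + star a) + b * star a) =
      Φ a + Φ (a * b + star a) + Φ (b * star a) := by
    have hoff : e * (a + (a * b + star a)) + (a + (a * b + star a)) * e = a + (a * b + star a) := by
      simp only [mul_add, add_mul, ha.1, ha.2, hab.1, hab.2, has.1, has.2]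
      abel
    have hv : inPeirce e 1 0 (a * b + star a) := inPeirce_one_zero_iff.mpr
      ⟨by rw [mul_add, hab.1, has.1, add_zero], by rw [add_mul, hab.2, has.2]⟩
    rw [hΦ.map_add_of_inPeirce_zero_zero hN heStar hoff hbas, hsum hv]
  have h₁ : starJordan a (b + (1 - e)) = a + (a * b + star a) + b * star a := by
    simp only [starJordan, mul_add, add_mul, mul_sub, sub_mul, mul_one, one_mul, ha.2, has.1]
    abel
  have h₂ : starJordan a (1 - e) = a + star a := by
    simp only [starJordan, mul_sub, sub_mul, mul_one, one_mul, ha.2, has.1, sub_zero]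
  rw [h₁, hbig, h₂, haas, starJordan, hab'] at hsplit
  linear_combination (norm := abel1) hsplit

end IsScaledStarJordanDer

end

theorem stmt_6_general {A : Type*} [NonAssocRing A] [Module ℂ A]
    [StarRing A]
    (halt₁ : ∀ a b : A, a * a * b = a * (a * b))
    (halt₂ : ∀ a b : A, b * a * a = b * (a * a))
    (e : A) (heStar : star e = e) (heIdem : e * e = e)
    (n : ℕ) (hn : 2 ≤ n) (Φ : A → A)
    (hΦ : ∀ x y : A,
      Φ (leftStarJordan (List.ofFn (lastTwoFamily n x y))) =
        ∑ k : Fin n, leftStarJordan (List.ofFn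
          (Function.update (lastTwoFamily n x y) k (Φ (lastTwoFamily n x y k))))) :
    ∀ a b c d : A, inPeirce e 0 1 a → inPeirce e 0 1 b →
      inPeirce e 1 0 c → inPeirce e 1 0 d →
      Φ (a * b + star a) = Φ (a * b) + Φ (star a) ∧
      Φ (c * d + star c) = Φ (c * d) + Φ (star c) := by
  obtain ⟨m, rfl⟩ : ∃ m, n = m + 2 := ⟨n - 2, by omega⟩
  have : IsAddTorsionFree A := .of_isTorsionFree ℂ A
  have hN : 2 ^ m ≠ 0 := pow_ne_zero m two_ne_zero
  have hdiv (x : A) : ∃ u, 2 ^ m • u = x :=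
    ⟨((2 ^ m : ℕ) : ℂ)⁻¹ • x, by rw [← Nat.cast_smul_eq_nsmul ℂ, smul_inv_smul₀ (by simp)]⟩
  have hD := isScaledStarJordanDer_of_lastTwoFamily hΦ
  intro a b c d ha hb hc hd
  rw [inPeirce_one_zero_iff_inPeirce_one_sub] at hc hd
  exact ⟨hD.map_mul_add_star hN hdiv halt₁ halt₂ heStar heIdem ha hb,
    hD.map_mul_add_star hN hdiv halt₁ halt₂ (by simp [heStar])
      (by simp [sub_mul, mul_sub, heIdem]) hc hd⟩

theorem stmt_6 {A : Type*} [NonAssocRing A] [Module ℂ A]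
    [SMulCommClass ℂ A A] [IsScalarTower ℂ A A] [StarRing A]
    (halt₁ : ∀ a b : A, a * a * b = a * (a * b))
    (halt₂ : ∀ a b : A, b * a * a = b * (a * a))
    (e : A) (heStar : star e = e) (heIdem : e * e = e) (he0 : e ≠ 0) (he1 : e ≠ 1)
    (hsp : ∀ x : A, (∀ r : A, x * r * e = 0) → x = 0)
    (hcl : ∀ x : A, (∀ r : A, x * r * (1 - e) = 0) → x = 0)
    (n : ℕ) (hn : 2 ≤ n) (Φ : A → A)
    (hΦ : ∀ x y : A,
      Φ (leftStarJordan (List.ofFn (lastTwoFamily n x y))) =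
        ∑ k : Fin n, leftStarJordan (List.ofFn
          (Function.update (lastTwoFamily n x y) k (Φ (lastTwoFamily n x y k))))) :
    ∀ a b c d : A, inPeirce e 0 1 a → inPeirce e 0 1 b →
      inPeirce e 1 0 c → inPeirce e 1 0 d →
      Φ (a * b + star a) = Φ (a * b) + Φ (star a) ∧
      Φ (c * d + star c) = Φ (c * d) + Φ (star c) :=
  stmt_6_general halt₁ halt₂ e heStar heIdem n hn Φ hΦ
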